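/- If P is a projective cover of a regular category C, then P is pointed if and only if C is pointed; moreover, in that case, writing N for the null morphisms of P and M for the null morphisms of C, one has N^C = M and M_P = N. -/

import Mathlib

open CategoryTheory CategoryTheory.Limits

universe v u

variable {C : Type u} [Category.{v} C]

/-- A class of morphisms of a category. -/
abbrev MorClass (C : Type u) [Category.{v} C] :=
  ∀ ⦃X Y : C⦄, (X ⟶ Y) → Prop

/-- An ideal of morphisms: closed under pre- and post-composition with arbitrary morphisms. -/
def IsMorIdeal (N : MorClass C) : Prop :=
  (∀ ⦃X Y Z : C⦄ (f : X ⟶ Y) (g : Y ⟶ Z), N g → N (f ≫ g)) ∧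
  (∀ ⦃X Y Z : C⦄ (f : X ⟶ Y) (g : Y ⟶ Z), N f → N (f ≫ g))

/-- `k` is a weak `N`-kernel of `f`. -/
def IsWeakKernel (N : MorClass C) {K X Y : C} (f : X ⟶ Y) (k : K ⟶ X) : Prop :=
  N (k ≫ f) ∧ ∀ ⦃K' : C⦄ (k' : K' ⟶ X), N (k' ≫ f) → ∃ u : K' ⟶ K, u ≫ k = k'

/-- `k` is an `N`-kernel of `f` (unique factorization). -/
def IsNKernel (N : MorClass C) {K X Y : C} (f : X ⟶ Y) (k : K ⟶ X) : Prop :=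
  N (k ≫ f) ∧ ∀ ⦃K' : C⦄ (k' : K' ⟶ X), N (k' ≫ f) → ∃! u : K' ⟶ K, u ≫ k = k'

def HasWeakKernels (N : MorClass C) : Prop :=
  ∀ ⦃X Y : C⦄ (f : X ⟶ Y), ∃ (K : C) (k : K ⟶ X), IsWeakKernel N f k

def HasNKernels (N : MorClass C) : Prop :=
  ∀ ⦃X Y : C⦄ (f : X ⟶ Y), ∃ (K : C) (k : K ⟶ X), IsNKernel N f k

/-- The condition (∗π₀) for a pair of parallel morphisms: for a weak `N`-kernel `k` of `f₁`
and any morphism `g`, `g f₁ k = g f₂ k ⟺ g f₁ = g f₂`. -/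
def StarPi0 (N : MorClass C) {X Y : C} (f₁ f₂ : X ⟶ Y) : Prop :=
  ∀ ⦃K : C⦄ (k : K ⟶ X), IsWeakKernel N f₁ k →
    ∀ ⦃Z : C⦄ (g : Y ⟶ Z), (k ≫ f₁ ≫ g = k ≫ f₂ ≫ g ↔ f₁ ≫ g = f₂ ≫ g)

/-- `(u, v)` is a weak kernel pair of `f`. -/
def IsWeakKernelPair {P X Y : C} (f : X ⟶ Y) (u v : P ⟶ X) : Prop :=
  u ≫ f = v ≫ f ∧ ∀ ⦃Q : C⦄ (u' v' : Q ⟶ X), u' ≫ f = v' ≫ f →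
    ∃ w : Q ⟶ P, w ≫ u = u' ∧ w ≫ v = v'

/-- `(u, v)` is the kernel pair of `f`. -/
def IsKernelPairOf {P X Y : C} (f : X ⟶ Y) (u v : P ⟶ X) : Prop :=
  u ≫ f = v ≫ f ∧ ∀ ⦃Q : C⦄ (u' v' : Q ⟶ X), u' ≫ f = v' ≫ f →
    ∃! w : Q ⟶ P, w ≫ u = u' ∧ w ≫ v = v'

def HasWeakKernelPairs (C : Type u) [Category.{v} C] : Prop :=
  ∀ ⦃X Y : C⦄ (f : X ⟶ Y), ∃ (P : C) (u v : P ⟶ X), IsWeakKernelPair f u v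

def HasKernelPairs (C : Type u) [Category.{v} C] : Prop :=
  ∀ ⦃X Y : C⦄ (f : X ⟶ Y), ∃ (P : C) (u v : P ⟶ X), IsKernelPairOf f u v

/-- `f` is a coequalizer of the pair `(u, v)`. -/
def IsCoequalizerOf {P X Y : C} (u v : P ⟶ X) (f : X ⟶ Y) : Prop :=
  u ≫ f = v ≫ f ∧ ∀ ⦃Z : C⦄ (g : X ⟶ Z), u ≫ g = v ≫ g → ∃! h : Y ⟶ Z, f ≫ h = g

/-- `f` is a regular epimorphism: a coequalizer of some pair. -/
def IsRegEpi {X Y : C} (f : X ⟶ Y) : Prop :=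
  ∃ (P : C) (u v : P ⟶ X), IsCoequalizerOf u v f

/-- `(p₁, p₂)` is a pullback of `(f, g)`. -/
def IsPullbackSq {P X Y Z : C} (p₁ : P ⟶ X) (p₂ : P ⟶ Y) (f : X ⟶ Z) (g : Y ⟶ Z) : Prop :=
  p₁ ≫ f = p₂ ≫ g ∧ ∀ ⦃Q : C⦄ (q₁ : Q ⟶ X) (q₂ : Q ⟶ Y), q₁ ≫ f = q₂ ≫ g →
    ∃! w : Q ⟶ P, w ≫ p₁ = q₁ ∧ w ≫ p₂ = q₂

/-- A regular category: finitely complete, kernel pairs have coequalizers, and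
regular epimorphisms are stable under pullback. -/
structure IsRegularCat (C : Type u) [Category.{v} C] : Prop where
  hasFiniteLimits : HasFiniteLimits C
  coeqOfKernelPairs : ∀ ⦃P X Y : C⦄ (f : X ⟶ Y) (u v : P ⟶ X), IsKernelPairOf f u v →
    ∃ (Q : C) (q : X ⟶ Q), IsCoequalizerOf u v q
  regEpiStable : ∀ ⦃P X Y Z : C⦄ (p₁ : P ⟶ X) (p₂ : P ⟶ Y) (f : X ⟶ Z) (g : Y ⟶ Z),
    IsPullbackSq p₁ p₂ f g → IsRegEpi g → IsRegEpi p₁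

/-- `P` (a class of objects, regarded as a full subcategory) is a projective cover of `C`. -/
structure IsProjectiveCover (P : Set C) : Prop where
  proj : ∀ ⦃X : C⦄, X ∈ P → ∀ ⦃A B : C⦄ (e : A ⟶ B), IsRegEpi e →
    ∀ f : X ⟶ B, ∃ g : X ⟶ A, g ≫ e = f
  covers : ∀ X : C, ∃ (Q : C) (_ : Q ∈ P) (e : Q ⟶ X), IsRegEpi e

/-- An ideal of the full subcategory on `P`, encoded as a class of morphisms of `C`
supported on `P`-objects and closed under composition with `P`-morphisms. -/
def IsMorIdealOn (P : Set C) (N : MorClass C) : Prop :=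
  (∀ ⦃X Y : C⦄ (f : X ⟶ Y), N f → X ∈ P ∧ Y ∈ P) ∧
  (∀ ⦃X Y Z : C⦄ (f : X ⟶ Y) (g : Y ⟶ Z), X ∈ P → N g → N (f ≫ g)) ∧
  (∀ ⦃X Y Z : C⦄ (f : X ⟶ Y) (g : Y ⟶ Z), Z ∈ P → N f → N (f ≫ g))

/-- The extension `N^C` of an ideal `N` of the full subcategory `P` to `C`. -/
def extClass (P : Set C) (N : MorClass C) : MorClass C := fun X Y f =>
  ∃ (A B : C) (_ : A ∈ P) (_ : B ∈ P) (n : A ⟶ B) (e : A ⟶ X) (e' : B ⟶ Y),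
    IsRegEpi e ∧ IsRegEpi e' ∧ N n ∧ e ≫ f = n ≫ e'

/-- The restriction `M_P` of an ideal `M` of `C` to the full subcategory `P`. -/
def restClass (P : Set C) (M : MorClass C) : MorClass C := fun X Y f =>
  X ∈ P ∧ Y ∈ P ∧ M f

/-- `k` is a weak `N`-kernel of `f` computed in the full subcategory `P`. -/
def IsWeakKernelOn (P : Set C) (N : MorClass C) {K X Y : C} (f : X ⟶ Y) (k : K ⟶ X) : Prop :=
  K ∈ P ∧ N (k ≫ f) ∧ ∀ ⦃K' : C⦄, K' ∈ P → ∀ k' : K' ⟶ X, N (k' ≫ f) →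
    ∃ u : K' ⟶ K, u ≫ k = k'

def HasWeakKernelsOn (P : Set C) (N : MorClass C) : Prop :=
  ∀ ⦃X Y : C⦄, X ∈ P → Y ∈ P → ∀ f : X ⟶ Y, ∃ (K : C) (k : K ⟶ X), IsWeakKernelOn P N f k

/-- The condition (∗π₀) interpreted in the full subcategory `P`. -/
def StarPi0On (P : Set C) (N : MorClass C) {X Y : C} (f₁ f₂ : X ⟶ Y) : Prop :=
  ∀ ⦃K : C⦄ (k : K ⟶ X), IsWeakKernelOn P N f₁ k →
    ∀ ⦃Z : C⦄, Z ∈ P → ∀ g : Y ⟶ Z, (k ≫ f₁ ≫ g = k ≫ f₂ ≫ g ↔ f₁ ≫ g = f₂ ≫ g)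

/-- Every internal reflexive graph of `C` satisfies (∗π₀). -/
def ReflGraphsStarPi0 (N : MorClass C) : Prop :=
  ∀ ⦃G₁ G₀ : C⦄ (d c : G₁ ⟶ G₀) (e : G₀ ⟶ G₁), e ≫ d = 𝟙 G₀ → e ≫ c = 𝟙 G₀ →
    StarPi0 N d c

/-- Every internal reflexive graph of the full subcategory `P` satisfies (∗π₀). -/
def ReflGraphsStarPi0On (P : Set C) (N : MorClass C) : Prop :=
  ∀ ⦃G₁ G₀ : C⦄, G₁ ∈ P → G₀ ∈ P → ∀ (d c : G₁ ⟶ G₀) (e : G₀ ⟶ G₁),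
    e ≫ d = 𝟙 G₀ → e ≫ c = 𝟙 G₀ → StarPi0On P N d c

/-- Every regular epimorphism is a coequalizer of its kernel star (star-regularity condition). -/
def RegEpisCoeqOfKernelStar (N : MorClass C) : Prop :=
  ∀ ⦃X Y : C⦄ (f : X ⟶ Y), IsRegEpi f →
    ∀ ⦃P : C⦄ (u v : P ⟶ X), IsKernelPairOf f u v →
      ∀ ⦃K : C⦄ (k : K ⟶ P), IsNKernel N u k →
        IsCoequalizerOf (k ≫ u) (k ≫ v) f

/-- `f` is `N`-saturating. -/
def IsSaturating (N : MorClass C) {P' Y : C} (f : P' ⟶ Y) : Prop :=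
  ∀ ⦃X : C⦄ (n : X ⟶ Y), N n →
    ∃ (Z : C) (g : Z ⟶ X) (m : Z ⟶ P'), IsRegEpi g ∧ N m ∧ m ≫ f = g ≫ n

/-- `C` is a regular completion of `P`: `P` is a projective cover and every object of `C`
admits a monomorphism into a finite product of `P`-objects (expressed via a jointly monic
finite family). -/
def IsRegularCompletionOf (P : Set C) : Prop :=
  IsProjectiveCover P ∧
    ∀ X : C, ∃ (n : ℕ) (obj : Fin n → C) (_ : ∀ i, obj i ∈ P) (m : ∀ i, X ⟶ obj i),
      ∀ ⦃W : C⦄ (a b : W ⟶ X), (∀ i, a ≫ m i = b ≫ m i) → a = b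

/-- `C` is pointed via the ideal `N` of null morphisms. -/
def IsPointedVia (N : MorClass C) : Prop :=
  IsMorIdeal N ∧ ∀ X Y : C, ∃! f : X ⟶ Y, N f

/-- The full subcategory `P` is pointed via the ideal `N` of null morphisms. -/
def IsPointedOn (P : Set C) (N : MorClass C) : Prop :=
  IsMorIdealOn P N ∧ ∀ ⦃X Y : C⦄, X ∈ P → Y ∈ P → ∃! f : X ⟶ Y, N f

/-- `f` is a normal epimorphism (a cokernel) with respect to the ideal `N`. -/
def IsNormalEpi (N : MorClass C) {X Y : C} (f : X ⟶ Y) : Prop :=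
  ∃ (A : C) (h : A ⟶ X), N (h ≫ f) ∧
    ∀ ⦃Z : C⦄ (g : X ⟶ Z), N (h ≫ g) → ∃! t : Y ⟶ Z, f ≫ t = g

/-!
The null morphisms of `C` are forced to be the morphisms that lift, along regular epimorphisms
out of `P`-objects, to null morphisms of `P`. Any two such lifts with common codomain cover
agree, because projectivity of `P`-objects lets one compare them inside `P`, where null
morphisms are unique; regular epimorphisms being epic, this pins down a unique null morphism
between any two objects of `C`. Conversely the null morphisms of `C` restrict to `P`. Since a
pointed structure is unique whenever it exists, both `N^C = M` and `M_P = N` follow.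
-/

lemma IsRegEpi.epi {X Y : C} {f : X ⟶ Y} (hf : IsRegEpi f) : Epi f := by
  obtain ⟨Q, u, v, huv, hcoeq⟩ := hf
  refine ⟨fun g g' h => ?_⟩
  obtain ⟨t, -, ht⟩ := hcoeq (f ≫ g) (by rw [← Category.assoc, huv, Category.assoc])
  exact (ht g rfl).trans (ht g' h.symm).symm

section Pointed

variable {P : Set C} {N N' : MorClass C}

lemma IsPointedOn.unique (hN : IsPointedOn P N) (hN' : IsPointedOn P N') : N = N' := by
  suffices key : ∀ {N N' : MorClass C}, IsPointedOn P N → IsPointedOn P N' →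
      ∀ ⦃X Y : C⦄ (f : X ⟶ Y), N f → N' f by
    funext X Y f
    exact propext ⟨key hN hN' f, key hN' hN f⟩
  intro N N' hN hN' X Y f hf
  obtain ⟨hX, hY⟩ := hN.1.1 f hf
  obtain ⟨a, ha, -⟩ := hN.2 hX hX
  obtain ⟨b, hb, -⟩ := hN'.2 hX hY
  -- `a ≫ b` is null for both classes, hence equal to `f`
  rw [(hN.2 hX hY).unique hf (hN.1.2.2 a b hY ha)]
  exact hN'.1.2.1 a b hX hb

lemma IsPointedVia.isPointedOn_univ {M : MorClass C} (hM : IsPointedVia M) :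
    IsPointedOn Set.univ M :=
  ⟨⟨fun _ _ _ _ => ⟨trivial, trivial⟩, fun _ _ _ f g _ hg => hM.1.1 f g hg,
    fun _ _ _ f g _ hf => hM.1.2 f g hf⟩, fun X Y _ _ => hM.2 X Y⟩

lemma IsPointedVia.unique {M M' : MorClass C} (hM : IsPointedVia M) (hM' : IsPointedVia M') :
    M = M' :=
  hM.isPointedOn_univ.unique hM'.isPointedOn_univ

lemma isPointedOn_restClass {M : MorClass C} (hM : IsPointedVia M) :
    IsPointedOn P (restClass P M) := by
  refine ⟨⟨fun X Y f hf => ⟨hf.1, hf.2.1⟩, fun X Y Z f g hX hg => ⟨hX, hg.2.1, hM.1.1 f g hg.2.2⟩,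
    fun X Y Z f g hZ hf => ⟨hf.1, hZ, hM.1.2 f g hf.2.2⟩⟩, fun X Y hX hY => ?_⟩
  obtain ⟨f, hf, hu⟩ := hM.2 X Y
  exact ⟨f, ⟨hX, hY, hf⟩, fun g hg => hu g hg.2.2⟩

variable (hP : IsProjectiveCover P) (hN : IsPointedOn P N)
include hP hN

lemma IsPointedOn.null_comp_eq_of_isRegEpi {A B B' Y : C} {m : A ⟶ B} {m' : A ⟶ B'}
    (hm : N m) (hm' : N m') {s : B ⟶ Y} (s' : B' ⟶ Y) (hs : IsRegEpi s) :
    m ≫ s = m' ≫ s' := by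
  obtain ⟨hA, hB⟩ := hN.1.1 m hm
  obtain ⟨t, rfl⟩ := hP.proj (hN.1.1 m' hm').2 s hs s'
  rw [(hN.2 hA hB).unique hm (hN.1.2.2 m' t hB hm'), Category.assoc]

lemma IsPointedOn.comp_null_eq {Q A B : C} (u v : Q ⟶ A) {n : A ⟶ B} (hn : N n) :
    u ≫ n = v ≫ n := by
  obtain ⟨hA, hB⟩ := hN.1.1 n hn
  obtain ⟨Q', hQ', q, hq⟩ := hP.covers Q
  have := hq.epi
  refine (cancel_epi q).1 ?_
  simpa only [Category.assoc] using
    (hN.2 hQ' hB).unique (hN.1.2.1 (q ≫ u) n hQ' hn) (hN.1.2.1 (q ≫ v) n hQ' hn)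

lemma exists_extClass (X Y : C) : ∃ f : X ⟶ Y, extClass P N f := by
  obtain ⟨A, hA, e, Q, u, v, huv, hcoeq⟩ := hP.covers X
  obtain ⟨B, hB, e', he'⟩ := hP.covers Y
  obtain ⟨n, hn, -⟩ := hN.2 hA hB
  obtain ⟨f, hf, -⟩ := hcoeq (n ≫ e') (by
    simp only [← Category.assoc, hN.comp_null_eq hP u v hn])
  exact ⟨f, A, B, hA, hB, n, e, e', ⟨Q, u, v, huv, hcoeq⟩, he', hn, hf⟩

lemma extClass_eq {X Y : C} {f f' : X ⟶ Y} (hf : extClass P N f) (hf' : extClass P N f') :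
    f = f' := by
  obtain ⟨A, B, hA, -, n, e, e', he, he', hn, hsq⟩ := hf
  obtain ⟨A', B', -, -, n', e₂, e₂', he₂, -, hn', hsq'⟩ := hf'
  obtain ⟨t, rfl⟩ := hP.proj hA e₂ he₂ e
  have := he.epi
  refine (cancel_epi (t ≫ e₂)).1 ?_
  rw [hsq, Category.assoc, hsq', ← Category.assoc]
  exact hN.null_comp_eq_of_isRegEpi hP hn (hN.1.2.1 t n' hA hn') e₂' he'

lemma isMorIdeal_extClass : IsMorIdeal (extClass P N) := by
  constructor
  · rintro X Y Z f g ⟨A, B, hA, hB, n, e, e', he, he', hn, hsq⟩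
    obtain ⟨A', hA', eX, heX⟩ := hP.covers X
    obtain ⟨l, hl⟩ := hP.proj hA' e he (eX ≫ f)
    refine ⟨A', B, hA', hB, l ≫ n, eX, e', heX, he', hN.1.2.1 l n hA' hn, ?_⟩
    rw [← Category.assoc, ← hl, Category.assoc, hsq, Category.assoc]
  · rintro X Y Z f g ⟨A, B, hA, hB, n, e, e', he, he', hn, hsq⟩
    obtain ⟨B', hB', eZ, heZ⟩ := hP.covers Z
    obtain ⟨l, hl⟩ := hP.proj hB eZ heZ (e' ≫ g)
    refine ⟨A, B', hA, hB', n ≫ l, e, eZ, he, heZ, hN.1.2.2 n l hB' hn, ?_⟩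
    rw [← Category.assoc, hsq, Category.assoc, Category.assoc, hl]

lemma isPointedVia_extClass : IsPointedVia (extClass P N) := by
  refine ⟨isMorIdeal_extClass hP hN, fun X Y => ?_⟩
  obtain ⟨f, hf⟩ := exists_extClass hP hN X Y
  exact ⟨f, hf, fun g hg => extClass_eq hP hN hg hf⟩

end Pointed

theorem statement16_general (P : Set C) (hP : IsProjectiveCover P) :
    ((∃ N : MorClass C, IsPointedOn P N) ↔ (∃ M : MorClass C, IsPointedVia M)) ∧
      ∀ N M : MorClass C, IsPointedOn P N → IsPointedVia M →
        extClass P N = M ∧ restClass P M = N :=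
  ⟨⟨fun ⟨N, hN⟩ => ⟨extClass P N, isPointedVia_extClass hP hN⟩,
    fun ⟨M, hM⟩ => ⟨restClass P M, isPointedOn_restClass hM⟩⟩,
   fun _ _ hN hM => ⟨(isPointedVia_extClass hP hN).unique hM, (isPointedOn_restClass hM).unique hN⟩⟩

/-- If P is a projective cover of a regular category C, then P is pointed
iff C is pointed; moreover, for the respective ideals of null morphisms N (of P) and
M (of C) one has N^C = M and M_P = N. -/
theorem statement16 (hC : IsRegularCat C) (P : Set C) (hP : IsProjectiveCover P) :
    ((∃ N : MorClass C, IsPointedOn P N) ↔ (∃ M : MorClass C, IsPointedVia M)) ∧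
      ∀ N M : MorClass C, IsPointedOn P N → IsPointedVia M →
        extClass P N = M ∧ restClass P M = N :=
  statement16_general P hP
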